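/- arXiv:2502.08593 — 7 statements merged into one kernel-verified Lean document; each statement's English description precedes it below -/
import Mathlib

section
/- Let X₁ and X₂ be random variables on a probability space (Ω, 𝓕, P) taking values in measurable spaces 𝒳₁ and 𝒳₂, let τ₁ : 𝒳₁ → ℝ and τ₂ : 𝒳₂ → ℝ be measurable feature statistics, and define the IT outlier scores λⱼ(x) := −log₂ P(τⱼ(Xⱼ) ≥ τⱼ(x)) for j = 1, 2. Assume the law of τ₁(X₁) is atomless. Then for every c ≥ 0 the event {λ₁(X₁) ≥ c} has probability exactly 2^{−c} > 0, and for every x₂ ∈ 𝒳₂ the conditional probability satisfies P( λ₂(X₂) ≥ λ₂(x₂) ∣ λ₁(X₁) ≥ c ) ≤ 2^{c − λ₂(x₂)}. -/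
/-!
Write `G t = ν [t, ∞)` for the survival function of the law `ν` of a real statistic, so that the
score is `-log₂ G`. Up to the `ν`-null set `{G = 0}`, the event `{c ≤ λ}` is `{G ≤ 2^{-c}}`, an
upper set `S` of `ℝ`. Every nonempty compact subset of `S` lies in `[m, ∞)` for its minimum
`m ∈ S`, so inner regularity gives `ν S ≤ 2^{-c}`. Without atoms `ν (-∞, t] = 1 - G t`, and the
same argument applied to the lower set `Sᶜ` gives `ν Sᶜ ≤ 1 - 2^{-c}`, hence equality. The
conditional bound is then `P(A ∩ B) / P(B) ≤ P(A) / 2^{-c} ≤ 2^{c - λ₂(x₂)}`.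
-/

open MeasureTheory ENNReal ProbabilityTheory

open Set

theorem MeasureTheory.Measure.le_of_forall_isCompact_nonempty_le {α : Type*} [TopologicalSpace α]
    [MeasurableSpace α] (μ : Measure α) [μ.InnerRegular] {s : Set α} (hs : MeasurableSet s)
    {r : ℝ≥0∞} (h : ∀ K ⊆ s, IsCompact K → K.Nonempty → μ K ≤ r) : μ s ≤ r := by
  rw [hs.measure_eq_iSup_isCompact μ]
  refine iSup₂_le fun K hKs => iSup_le fun hK => ?_
  rcases K.eq_empty_or_nonempty with rfl | hne
  · simp
  · exact h K hKs hK hne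

section SurvivalFunction

variable {α : Type*} [LinearOrder α] [MeasurableSpace α] (μ : Measure α)

theorem antitone_measure_Ici : Antitone fun t => μ (Ici t) :=
  fun _ _ hab => measure_mono (Ici_subset_Ici.2 hab)

theorem isUpperSet_setOf_measure_Ici_le (r : ℝ≥0∞) : IsUpperSet {t | μ (Ici t) ≤ r} :=
  fun _ _ hab ha => (antitone_measure_Ici μ hab).trans ha

variable [TopologicalSpace α] [OrderClosedTopology α] [BorelSpace α] [μ.InnerRegular]

theorem measure_setOf_measure_Ici_le (r : ℝ≥0∞) : μ {t | μ (Ici t) ≤ r} ≤ r := by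
  refine μ.le_of_forall_isCompact_nonempty_le
    (isUpperSet_setOf_measure_Ici_le μ r).ordConnected.measurableSet
    fun K hKs hK hne => ?_
  obtain ⟨m, hmK, hm⟩ := hK.exists_isLeast hne
  exact (measure_mono fun x hx => hm hx).trans (hKs hmK)

theorem ae_measure_Ici_pos : ∀ᵐ t ∂μ, 0 < μ (Ici t) := by
  simpa only [ae_iff, not_lt, nonpos_iff_eq_zero, le_zero_iff] using
    measure_setOf_measure_Ici_le μ 0

theorem measure_setOf_measure_Iic_le (r : ℝ≥0∞) : μ {t | μ (Iic t) ≤ r} ≤ r := by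
  have hlow : IsLowerSet {t | μ (Iic t) ≤ r} := fun _ _ hab ha =>
    (measure_mono (Iic_subset_Iic.2 hab)).trans ha
  refine μ.le_of_forall_isCompact_nonempty_le hlow.ordConnected.measurableSet
    fun K hKs hK hne => ?_
  obtain ⟨m, hmK, hm⟩ := hK.exists_isGreatest hne
  exact (measure_mono fun x hx => hm hx).trans (hKs hmK)

theorem measure_setOf_measure_Ici_le_eq_self [IsProbabilityMeasure μ] [NullSingletonClass μ]
    {r : ℝ≥0∞} (hr : r ≤ 1) : μ {t | μ (Ici t) ≤ r} = r := by
  set S := {t | μ (Ici t) ≤ r}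
  have hS : MeasurableSet S := (isUpperSet_setOf_measure_Ici_le μ r).ordConnected.measurableSet
  have hcompl : Sᶜ ⊆ {t | μ (Iic t) ≤ 1 - r} := fun t (ht : ¬μ (Ici t) ≤ r) => by
    have : μ (Iic t) = 1 - μ (Ici t) := by
      rw [← compl_Ioi, prob_compl_eq_one_sub measurableSet_Ioi, measure_congr Ioi_ae_eq_Ici]
    exact this.le.trans (tsub_le_tsub_left (not_le.1 ht).le 1)
  refine le_antisymm (measure_setOf_measure_Ici_le μ r) ?_
  calc r = 1 - (1 - r) := (ENNReal.sub_sub_cancel one_ne_top hr).symm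
    _ ≤ 1 - μ Sᶜ := tsub_le_tsub_left ((measure_mono hcompl).trans
        (measure_setOf_measure_Iic_le μ _)) 1
    _ = μ S := by rw [prob_compl_eq_one_sub hS, ENNReal.sub_sub_cancel one_ne_top prob_le_one]

end SurvivalFunction

theorem ProbabilityTheory.cond_apply_le_inv_mul {Ω : Type*} [MeasurableSpace Ω] (μ : Measure Ω)
    (s t : Set Ω) : μ[t | s] ≤ (μ s)⁻¹ * μ t := by
  rw [cond, Measure.smul_apply, smul_eq_mul]
  gcongr
  exact Measure.restrict_le_self

/-- The IT outlier score `λ_τ(y)` of the paper is `itOutlierScore ν (τ y)`, where `ν` is the law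
of `τ(Z)`. -/
noncomputable def itOutlierScore (ν : Measure ℝ) (t : ℝ) : ℝ :=
  -Real.logb 2 (ν (Ici t)).toReal

theorem measurable_itOutlierScore (ν : Measure ℝ) : Measurable (itOutlierScore ν) :=
  ((antitone_measure_Ici ν).measurable.ennreal_toReal.log.div_const _).neg

section OutlierScore

variable (ν : Measure ℝ) [IsFiniteMeasure ν]

theorem le_itOutlierScore_iff {c t : ℝ} (ht : 0 < ν (Ici t)) :
    c ≤ itOutlierScore ν t ↔ ν (Ici t) ≤ ENNReal.ofReal (2 ^ (-c)) := by
  rw [itOutlierScore, le_neg, Real.logb_le_iff_le_rpow one_lt_two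
    (ENNReal.toReal_pos ht.ne' (measure_ne_top ν _)),
    ENNReal.le_ofReal_iff_toReal_le (measure_ne_top ν _) (by positivity)]

theorem measure_setOf_le_itOutlierScore (c : ℝ) :
    ν {t | c ≤ itOutlierScore ν t} = ν {t | ν (Ici t) ≤ ENNReal.ofReal (2 ^ (-c))} :=
  measure_congr <| Filter.eventuallyEq_set.2 <|
    (ae_measure_Ici_pos ν).mono fun _ ht => le_itOutlierScore_iff ν ht

theorem measure_setOf_le_itOutlierScore_le (c : ℝ) :
    ν {t | c ≤ itOutlierScore ν t} ≤ ENNReal.ofReal (2 ^ (-c)) :=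
  (measure_setOf_le_itOutlierScore ν c).trans_le (measure_setOf_measure_Ici_le ν _)

theorem measure_setOf_le_itOutlierScore_eq [IsProbabilityMeasure ν] [NullSingletonClass ν]
    {c : ℝ} (hc : 0 ≤ c) :
    ν {t | c ≤ itOutlierScore ν t} = ENNReal.ofReal (2 ^ (-c)) :=
  (measure_setOf_le_itOutlierScore ν c).trans <| measure_setOf_measure_Ici_le_eq_self ν <|
    ENNReal.ofReal_le_one.2 (Real.rpow_le_one_of_one_le_of_nonpos one_le_two (neg_nonpos.2 hc))

end OutlierScore

section RandomVariable

variable {Ω : Type*} [MeasurableSpace Ω] (P : Measure Ω) {Y : Ω → ℝ}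

theorem neg_logb_measure_le_eq_itOutlierScore_map (hY : Measurable Y) (t : ℝ) :
    -Real.logb 2 (P {ω | t ≤ Y ω}).toReal = itOutlierScore (P.map Y) t := by
  rw [itOutlierScore, Measure.map_apply hY measurableSet_Ici]
  rfl

theorem measure_setOf_le_itOutlierScore_map_comp (hY : Measurable Y) (c : ℝ) :
    P {ω | c ≤ itOutlierScore (P.map Y) (Y ω)} = P.map Y {t | c ≤ itOutlierScore (P.map Y) t} :=
  (Measure.map_apply hY (measurableSet_le measurable_const (measurable_itOutlierScore _))).symm

end RandomVariable

/-- Lemma 1: weak IT outliers rarely cause strong ones.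
For random variables `X₁ : Ω → 𝒳₁`, `X₂ : Ω → 𝒳₂`, measurable feature statistics
`τ₁, τ₂`, and IT outlier scores `λⱼ(x) = -log₂ P(τⱼ(Xⱼ) ≥ τⱼ(x))`, if the law of
`τ₁(X₁)` is atomless then for every `c ≥ 0` the event `{λ₁(X₁) ≥ c}` has
probability exactly `2^{-c} > 0`, and for every `x₂`,
`P(λ₂(X₂) ≥ λ₂(x₂) ∣ λ₁(X₁) ≥ c) ≤ 2^{c - λ₂(x₂)}`. -/
theorem weak_outliers_rarely_cause_strong_ones
    {Ω : Type*} [MeasurableSpace Ω] (P : Measure Ω) [IsProbabilityMeasure P]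
    {X1 : Type*} [MeasurableSpace X1] {X2 : Type*} [MeasurableSpace X2]
    (ξ1 : Ω → X1) (ξ2 : Ω → X2) (hξ1 : Measurable ξ1) (hξ2 : Measurable ξ2)
    (τ1 : X1 → ℝ) (τ2 : X2 → ℝ) (hτ1 : Measurable τ1) (hτ2 : Measurable τ2)
    (hatomless : ∀ t : ℝ, P {ω | τ1 (ξ1 ω) = t} = 0)
    (lam1 : X1 → ℝ)
    (hlam1 : ∀ x, lam1 x = -Real.logb 2 (P {ω | τ1 x ≤ τ1 (ξ1 ω)}).toReal)
    (lam2 : X2 → ℝ)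
    (hlam2 : ∀ x, lam2 x = -Real.logb 2 (P {ω | τ2 x ≤ τ2 (ξ2 ω)}).toReal) :
    ∀ c : ℝ, 0 ≤ c →
      (P {ω | c ≤ lam1 (ξ1 ω)} = ENNReal.ofReal ((2 : ℝ) ^ (-c)) ∧
       0 < P {ω | c ≤ lam1 (ξ1 ω)}) ∧
      (∀ x2 : X2,
        P[{ω | lam2 x2 ≤ lam2 (ξ2 ω)} | {ω | c ≤ lam1 (ξ1 ω)}]
          ≤ ENNReal.ofReal ((2 : ℝ) ^ (c - lam2 x2))) := by
  intro c hc
  have hY1 : Measurable (τ1 ∘ ξ1) := hτ1.comp hξ1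
  have hY2 : Measurable (τ2 ∘ ξ2) := hτ2.comp hξ2
  have : IsProbabilityMeasure (P.map (τ1 ∘ ξ1)) :=
    Measure.isProbabilityMeasure_map hY1.aemeasurable
  have : NullSingletonClass (P.map (τ1 ∘ ξ1)) :=
    ⟨fun t => by rw [Measure.map_apply hY1 (measurableSet_singleton t)]; exact hatomless t⟩
  have hlam1' (x : X1) : lam1 x = itOutlierScore (P.map (τ1 ∘ ξ1)) (τ1 x) :=
    (hlam1 x).trans (neg_logb_measure_le_eq_itOutlierScore_map P hY1 _)
  have hlam2' (x : X2) : lam2 x = itOutlierScore (P.map (τ2 ∘ ξ2)) (τ2 x) :=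
    (hlam2 x).trans (neg_logb_measure_le_eq_itOutlierScore_map P hY2 _)
  have hB : P {ω | c ≤ lam1 (ξ1 ω)} = ENNReal.ofReal (2 ^ (-c)) := by
    simp only [hlam1']
    exact (measure_setOf_le_itOutlierScore_map_comp P hY1 c).trans
      (measure_setOf_le_itOutlierScore_eq _ hc)
  refine ⟨⟨hB, hB ▸ ENNReal.ofReal_pos.2 (by positivity)⟩, fun x2 => ?_⟩
  have hA : P {ω | lam2 x2 ≤ lam2 (ξ2 ω)} ≤ ENNReal.ofReal (2 ^ (-lam2 x2)) := by
    simp only [hlam2']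
    exact (measure_setOf_le_itOutlierScore_map_comp P hY2 _).trans_le
      (measure_setOf_le_itOutlierScore_le _ _)
  calc P[{ω | lam2 x2 ≤ lam2 (ξ2 ω)} | {ω | c ≤ lam1 (ξ1 ω)}]
      ≤ (P {ω | c ≤ lam1 (ξ1 ω)})⁻¹ * P {ω | lam2 x2 ≤ lam2 (ξ2 ω)} :=
        cond_apply_le_inv_mul P _ _
    _ ≤ ENNReal.ofReal (2 ^ c) * ENNReal.ofReal (2 ^ (-lam2 x2)) := by
        rw [hB, ← ENNReal.ofReal_inv_of_pos (by positivity), ← Real.rpow_neg zero_le_two, neg_neg]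
        gcongr
    _ = ENNReal.ofReal (2 ^ (c - lam2 x2)) := by
        rw [← ENNReal.ofReal_mul (by positivity), ← Real.rpow_add two_pos, sub_eq_add_neg]
end

section
/- Let P be a probability measure on a measurable space 𝒳, let (Λᵢ)_{i∈ℕ} be a sequence of p-tests for P in ratio form, and let (wᵢ)_{i∈ℕ} be positive reals with ∑ᵢ wᵢ ≤ 1. Then the function x ↦ supᵢ wᵢ·Λᵢ(x) is again a p-test for P in ratio form, i.e., for every ε > 0, P({x : supᵢ wᵢΛᵢ(x) ≥ 1/ε}) ≤ ε. -/
open MeasureTheory ENNReal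

/-- A weighted combination `sup_i wᵢ·Λᵢ` of p-tests in ratio form
(with positive weights summing to at most 1) is again a p-test in ratio form. -/
theorem combination_p_tests_ratio_form
    {X : Type*} [MeasurableSpace X] (P : Measure X) [IsProbabilityMeasure P]
    (Λ : ℕ → X → ℝ≥0∞) (hmeas : ∀ i, Measurable (Λ i))
    (hptest : ∀ i, ∀ ε : ℝ≥0∞, 0 < ε → P {x | ε⁻¹ ≤ Λ i x} ≤ ε)
    (w : ℕ → ℝ≥0∞) (hw : ∀ i, 0 < w i) (hwsum : ∑' i, w i ≤ 1) :
    ∀ ε : ℝ≥0∞, 0 < ε → P {x | ε⁻¹ ≤ ⨆ i, w i * Λ i x} ≤ ε := by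
  intro ε hε
  refine le_of_forall_gt_imp_ge_of_dense fun δ hδ => ?_
  have hδ0 : 0 < δ := lt_trans hε hδ
  have hsub : {x | ε⁻¹ ≤ ⨆ i, w i * Λ i x} ⊆ ⋃ i, {x | (δ * w i)⁻¹ ≤ Λ i x} := by
    intro x hx
    have h1 : δ⁻¹ < ⨆ i, w i * Λ i x :=
      lt_of_lt_of_le (ENNReal.inv_lt_inv.mpr hδ) hx
    obtain ⟨i, hi⟩ := lt_iSup_iff.mp h1
    refine Set.mem_iUnion.mpr ⟨i, ?_⟩
    have hwi : w i ≤ 1 := le_trans (ENNReal.le_tsum i) hwsum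
    have hwt : w i ≠ ⊤ := (lt_of_le_of_lt hwi ENNReal.one_lt_top).ne
    have h2 : δ⁻¹ / w i ≤ Λ i x := by
      rw [ENNReal.div_le_iff_le_mul (Or.inl (hw i).ne') (Or.inl hwt)]
      exact le_of_lt (by rwa [mul_comm] at hi)
    have h3 : (δ * w i)⁻¹ = δ⁻¹ / w i := by
      rw [ENNReal.mul_inv (Or.inr hwt) (Or.inr (hw i).ne'), div_eq_mul_inv]
    simpa [h3] using h2
  calc P {x | ε⁻¹ ≤ ⨆ i, w i * Λ i x}
      ≤ P (⋃ i, {x | (δ * w i)⁻¹ ≤ Λ i x}) := measure_mono hsub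
    _ ≤ ∑' i, P {x | (δ * w i)⁻¹ ≤ Λ i x} := measure_iUnion_le _
    _ ≤ ∑' i, δ * w i :=
        ENNReal.tsum_le_tsum fun i => hptest i _ (ENNReal.mul_pos hδ0.ne' (hw i).ne')
    _ = δ * ∑' i, w i := ENNReal.tsum_mul_left
    _ ≤ δ * 1 := mul_le_mul_right hwsum δ
    _ = δ := mul_one δ
end

section
/- Let P be a probability measure on a measurable space 𝒳, let (Λᵢ)_{i∈ℕ} be a sequence of p-tests for P in probability form (i.e., P({x : Λᵢ(x) ≤ ε}) ≤ ε for every ε > 0 and every i), and let (wᵢ)_{i∈ℕ} be positive reals with ∑ᵢ wᵢ ≤ 1. Then the function x ↦ infᵢ Λᵢ(x)/wᵢ is again a p-test for P in probability form, i.e., for every ε > 0, P({x : infᵢ Λᵢ(x)/wᵢ ≤ ε}) ≤ ε. -/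
open MeasureTheory ENNReal

/-!
A union bound: if `⨅ i, Λᵢ x / wᵢ < c` then `Λᵢ x ≤ c wᵢ` for some `i`, an event of probability
at most `c wᵢ`; summing over `i` gives at most `c ∑ wᵢ ≤ c`. Passing from `≤ ε` to `< ε + δ` and
letting `δ → 0` handles infima that are not attained.
-/

def IsPTestProbForm {X : Type*} [MeasurableSpace X] (P : Measure X) (Λ : X → ℝ≥0∞) : Prop :=
  ∀ ε : ℝ≥0∞, 0 < ε → P {x | Λ x ≤ ε} ≤ ε

namespace IsPTestProbForm

variable {X : Type*} [MeasurableSpace X] {P : Measure X} {Λ : X → ℝ≥0∞}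

theorem measure_le_le (hΛ : IsPTestProbForm P Λ) (ε : ℝ≥0∞) : P {x | Λ x ≤ ε} ≤ ε := by
  rcases eq_or_ne ε 0 with rfl | hε
  · refine ENNReal.le_of_forall_pos_le_add fun δ hδ _ => ?_
    calc P {x | Λ x ≤ 0} ≤ P {x | Λ x ≤ δ} :=
          measure_mono fun _ hx => le_trans (α := ℝ≥0∞) hx zero_le
      _ ≤ δ := hΛ δ (by exact_mod_cast hδ)
      _ = 0 + δ := (zero_add _).symm
  · exact hΛ ε (pos_iff_ne_zero.2 hε)

theorem measure_div_lt_le (hΛ : IsPTestProbForm P Λ) (w : ℝ≥0∞) {c : ℝ≥0∞} (hc : c ≠ ∞) :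
    P {x | Λ x / w < c} ≤ c * w := by
  -- For `w = 0` the bound `c * w` is `0` (and `Λ x / 0 < c` means `Λ x = 0`), hence `ε = 0` above.
  have hsub : {x | Λ x / w < c} ⊆ {x | Λ x ≤ c * w} := fun x hx =>
    (ENNReal.div_le_iff_le_mul (Or.inr hc) (Or.inr (ne_bot_of_gt hx))).1 (le_of_lt hx)
  exact (measure_mono hsub).trans (hΛ.measure_le_le _)

end IsPTestProbForm

theorem measure_iInf_div_lt_le {X : Type*} [MeasurableSpace X] {P : Measure X}
    {Λ : ℕ → X → ℝ≥0∞} (hΛ : ∀ i, IsPTestProbForm P (Λ i)) (w : ℕ → ℝ≥0∞) {c : ℝ≥0∞}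
    (hc : c ≠ ∞) : P {x | ⨅ i, Λ i x / w i < c} ≤ c * ∑' i, w i := by
  have hsub : {x | ⨅ i, Λ i x / w i < c} = ⋃ i, {x | Λ i x / w i < c} := by
    ext x
    simp only [Set.mem_ofPred_eq, Set.mem_iUnion, iInf_lt_iff]
  calc P {x | ⨅ i, Λ i x / w i < c} ≤ ∑' i, P {x | Λ i x / w i < c} :=
        hsub ▸ measure_iUnion_le _
    _ ≤ ∑' i, c * w i := ENNReal.tsum_le_tsum fun i => (hΛ i).measure_div_lt_le (w i) hc
    _ = c * ∑' i, w i := ENNReal.tsum_mul_left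

theorem combination_p_tests_probability_form_general
    {X : Type*} [MeasurableSpace X] (P : Measure X)
    (Λ : ℕ → X → ℝ≥0∞)
    (hptest : ∀ i, ∀ ε : ℝ≥0∞, 0 < ε → P {x | Λ i x ≤ ε} ≤ ε)
    (w : ℕ → ℝ≥0∞) (hwsum : ∑' i, w i ≤ 1) :
    ∀ ε : ℝ≥0∞, 0 < ε → P {x | (⨅ i, Λ i x / w i) ≤ ε} ≤ ε := by
  intro ε _
  rcases eq_or_ne ε ∞ with rfl | hε
  · exact le_top
  refine ENNReal.le_of_forall_pos_le_add fun δ hδ _ => ?_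
  have hlt : ε < ε + δ := ENNReal.lt_add_right hε (by exact_mod_cast hδ.ne')
  calc P {x | (⨅ i, Λ i x / w i) ≤ ε} ≤ P {x | ⨅ i, Λ i x / w i < ε + δ} :=
        measure_mono fun x hx => lt_of_le_of_lt hx hlt
    _ ≤ (ε + δ) * ∑' i, w i := measure_iInf_div_lt_le hptest w (add_ne_top.2 ⟨hε, coe_ne_top⟩)
    _ ≤ ε + δ := mul_le_of_le_one_right' hwsum

/-- A weighted combination `inf_i Λᵢ/wᵢ` of p-tests in probability form
(with positive weights summing to at most 1) is again a p-test in probability form. -/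
theorem combination_p_tests_probability_form
    {X : Type*} [MeasurableSpace X] (P : Measure X) [IsProbabilityMeasure P]
    (Λ : ℕ → X → ℝ≥0∞) (hmeas : ∀ i, Measurable (Λ i))
    (hptest : ∀ i, ∀ ε : ℝ≥0∞, 0 < ε → P {x | Λ i x ≤ ε} ≤ ε)
    (w : ℕ → ℝ≥0∞) (hw : ∀ i, 0 < w i) (hwsum : ∑' i, w i ≤ 1) :
    ∀ ε : ℝ≥0∞, 0 < ε → P {x | (⨅ i, Λ i x / w i) ≤ ε} ≤ ε :=
  combination_p_tests_probability_form_general P Λ hptest w hwsum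
end

section
/- Let f : (0,1] → [0,∞] be a nonincreasing function with ∫₀¹ f(p) dp ≤ 1, and let V be a random variable on a probability space (Ω, 𝓕, P) with values in (0,1] satisfying P(V ≤ ε) ≤ ε for every ε ∈ (0,1]. Then E[f(V)] ≤ 1; i.e., every such calibrator f turns a p-value into an e-value. -/
/-!
Layer cake: both `E[F(V)]` and `∫₀¹ F` are integrals over `t > 0` of the measures of the
superlevel sets `{F > t}`. For an antitone `F` these are initial segments of `(0,1]`, and on an
initial segment with supremum `s` the p-value bound gives `P(V ≤ s) ≤ s`, which is exactly the
Lebesgue measure of the segment. The calibrator itself is only antitone on `(0,1]`, so it is first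
extended to an antitone function on `ℝ`.
-/

open MeasureTheory ENNReal Set

lemma volume_setOf_ofReal_lt_inter_Ioi (x : ℝ≥0∞) :
    volume ({t : ℝ | ENNReal.ofReal t < x} ∩ Ioi 0) = x := by
  rcases eq_or_ne x ∞ with rfl | hx
  · simp [ENNReal.ofReal_lt_top, Real.volume_Ioi]
  · have : {t : ℝ | ENNReal.ofReal t < x} ∩ Ioi 0 = Ioo 0 x.toReal := by
      ext t
      simp only [mem_inter_iff, mem_ofPred_eq, mem_Ioi, mem_Ioo]
      exact ⟨fun ⟨h, ht⟩ => ⟨ht, (ENNReal.ofReal_lt_iff_lt_toReal ht.le hx).1 h⟩,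
        fun ⟨ht, h⟩ => ⟨(ENNReal.ofReal_lt_iff_lt_toReal ht.le hx).2 h, ht⟩⟩
    rw [this, Real.volume_Ioo, sub_zero, ENNReal.ofReal_toReal hx]

theorem lintegral_eq_setLIntegral_Ioi_measure_ofReal_lt {α : Type*} [MeasurableSpace α]
    (μ : Measure α) [SFinite μ] {g : α → ℝ≥0∞} (hg : Measurable g) :
    ∫⁻ a, g a ∂μ = ∫⁻ t in Ioi (0 : ℝ), μ {a | ENNReal.ofReal t < g a} := by
  have hA : MeasurableSet {z : α × ℝ | ENNReal.ofReal z.2 < g z.1} :=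
    measurableSet_lt (ENNReal.measurable_ofReal.comp measurable_snd) (hg.comp measurable_fst)
  calc ∫⁻ a, g a ∂μ
      = ∫⁻ a, volume.restrict (Ioi 0) {t : ℝ | ENNReal.ofReal t < g a} ∂μ := by
        refine lintegral_congr fun a => ?_
        rw [Measure.restrict_apply (measurableSet_lt ENNReal.measurable_ofReal measurable_const),
          volume_setOf_ofReal_lt_inter_Ioi]
    _ = (μ.prod (volume.restrict (Ioi 0))) {z | ENNReal.ofReal z.2 < g z.1} :=
        (Measure.prod_apply hA).symm
    _ = ∫⁻ t in Ioi (0 : ℝ), μ {a | ENNReal.ofReal t < g a} := Measure.prod_apply_symm hA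

section PValue

variable {Ω : Type*} [MeasurableSpace Ω] {P : Measure Ω} {V : Ω → ℝ}

lemma measure_preimage_le_volume_inter_Ioc (hVrange : ∀ ω, V ω ∈ Ioc (0 : ℝ) 1)
    (hpval : ∀ ε ∈ Ioc (0 : ℝ) 1, P {ω | V ω ≤ ε} ≤ ENNReal.ofReal ε)
    {S : Set ℝ} (hS : IsLowerSet S) :
    P (V ⁻¹' S) ≤ volume (S ∩ Ioc 0 1) := by
  set T := S ∩ Ioc 0 1
  have hVT : V ⁻¹' S = V ⁻¹' T := by
    ext ω
    exact ⟨fun h => ⟨h, hVrange ω⟩, fun h => h.1⟩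
  rcases T.eq_empty_or_nonempty with hT | hT
  · simp [hVT, hT]
  have hbdd : BddAbove T := ⟨1, fun x hx => hx.2.2⟩
  set s := sSup T
  have hs : s ∈ Ioc (0 : ℝ) 1 := by
    obtain ⟨x, hx⟩ := hT
    exact ⟨hx.2.1.trans_le (le_csSup hbdd hx), csSup_le ⟨x, hx⟩ fun y hy => hy.2.2⟩
  have hIoo : Ioo 0 s ⊆ T := by
    intro q hq
    obtain ⟨p, hp, hqp⟩ := exists_lt_of_lt_csSup hT hq.2
    exact ⟨hS hqp.le hp.1, hq.1, hqp.le.trans hp.2.2⟩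
  calc P (V ⁻¹' S) ≤ P {ω | V ω ≤ s} := by
        rw [hVT]
        exact measure_mono fun ω hω => le_csSup hbdd hω
    _ ≤ ENNReal.ofReal s := hpval s hs
    _ = volume (Ioo 0 s) := by rw [Real.volume_Ioo, sub_zero]
    _ ≤ volume T := measure_mono hIoo

theorem lintegral_comp_le_setLIntegral_Ioc_of_antitone [SFinite P] (hV : Measurable V)
    (hVrange : ∀ ω, V ω ∈ Ioc (0 : ℝ) 1)
    (hpval : ∀ ε ∈ Ioc (0 : ℝ) 1, P {ω | V ω ≤ ε} ≤ ENNReal.ofReal ε)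
    {F : ℝ → ℝ≥0∞} (hF : Antitone F) :
    ∫⁻ ω, F (V ω) ∂P ≤ ∫⁻ p in Ioc (0 : ℝ) 1, F p := by
  rw [lintegral_eq_setLIntegral_Ioi_measure_ofReal_lt P (g := fun ω => F (V ω)) (hF.measurable.comp hV),
    lintegral_eq_setLIntegral_Ioi_measure_ofReal_lt _ hF.measurable]
  refine lintegral_mono fun t => ?_
  rw [Measure.restrict_apply (measurableSet_lt measurable_const hF.measurable)]
  exact measure_preimage_le_volume_inter_Ioc hVrange hpval
    fun _ _ hba ha => lt_of_lt_of_le ha (hF hba)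

end PValue

/-- Every calibrator turns a p-value into an e-value: if
`f : (0,1] → [0,∞]` is nonincreasing with `∫₀¹ f ≤ 1`, and `V` is a `(0,1]`-valued
random variable with `P(V ≤ ε) ≤ ε` for all `ε ∈ (0,1]`, then `E[f(V)] ≤ 1`. -/
theorem calibrator_turns_p_value_into_e_value
    {Ω : Type*} [MeasurableSpace Ω] (P : Measure Ω) [IsProbabilityMeasure P]
    (f : ℝ → ℝ≥0∞) (hmono : ∀ p ∈ Set.Ioc (0 : ℝ) 1, ∀ q ∈ Set.Ioc (0 : ℝ) 1,
      p ≤ q → f q ≤ f p)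
    (hint : ∫⁻ p in Set.Ioc (0 : ℝ) 1, f p ≤ 1)
    (V : Ω → ℝ) (hV : Measurable V) (hVrange : ∀ ω, V ω ∈ Set.Ioc (0 : ℝ) 1)
    (hpval : ∀ ε ∈ Set.Ioc (0 : ℝ) 1, P {ω | V ω ≤ ε} ≤ ENNReal.ofReal ε) :
    ∫⁻ ω, f (V ω) ∂P ≤ 1 := by
  obtain ⟨F, hF, hfF⟩ : ∃ F : ℝ → ℝ≥0∞, Antitone F ∧ EqOn f F (Ioc 0 1) :=
    AntitoneOn.exists_antitone_extension hmono (OrderBot.bddBelow _) (OrderTop.bddAbove _)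
  calc ∫⁻ ω, f (V ω) ∂P = ∫⁻ ω, F (V ω) ∂P := lintegral_congr fun ω => hfF (hVrange ω)
    _ ≤ ∫⁻ p in Ioc (0 : ℝ) 1, F p :=
        lintegral_comp_le_setLIntegral_Ioc_of_antitone hV hVrange hpval hF
    _ = ∫⁻ p in Ioc (0 : ℝ) 1, f p := (setLIntegral_congr_fun measurableSet_Ioc hfF).symm
    _ ≤ 1 := hint
end

section
/- The Ramdas calibrator f(p) := (1/p − 1 + ln p) / (ln p)² for p ∈ (0,1), extended by f(1) := 1/2, satisfies ∫₀¹ f(p) dp = 1 (as a Lebesgue integral over (0,1)), and f is nonincreasing on (0,1]. -/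
/-!
Substituting `p = exp (-t)` turns the calibrator into `(exp t - 1 - t) / t² = ∑ tⁿ / (n + 2)!`,
a power series with nonnegative coefficients and constant term `1 / 2`; so it is nonnegative and
nonincreasing in `p` on `(0, 1]`. On `(0, 1)` it is the derivative of `(p - 1) / log p`, which
tends to `0` as `p → 0⁺` and to `1` as `p → 1⁻`, so its integral is `1`.
-/

open MeasureTheory Set Filter Topology
open scoped Nat

noncomputable def expRemainderDivSq (t : ℝ) : ℝ := ∑' n : ℕ, t ^ n / (n + 2)!

theorem summable_pow_div_factorial_add_two (t : ℝ) :
    Summable fun n : ℕ => t ^ n / (n + 2)! := by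
  refine .of_norm_bounded (Real.summable_pow_div_factorial |t|) fun n => ?_
  rw [norm_div, norm_pow, Real.norm_eq_abs, Real.norm_natCast]
  gcongr
  omega

theorem sq_mul_expRemainderDivSq (t : ℝ) : t ^ 2 * expRemainderDivSq t = Real.exp t - 1 - t := by
  have hexp : HasSum (fun n : ℕ => t ^ n / n !) (Real.exp t) := by
    simpa [Real.exp_eq_exp_ℝ] using NormedSpace.expSeries_div_hasSum_exp t
  have htail : HasSum (fun n : ℕ => t ^ (n + 2) / (n + 2)!) (Real.exp t - 1 - t) := by
    simpa [Finset.sum_range_succ, sub_sub] using (hasSum_nat_add_iff' 2).2 hexp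
  refine HasSum.unique ?_ htail
  exact ((summable_pow_div_factorial_add_two t).hasSum.mul_left (t ^ 2)).congr_fun fun n => by ring

theorem expRemainderDivSq_zero : expRemainderDivSq 0 = 1 / 2 := by
  rw [expRemainderDivSq, tsum_eq_single 0 fun n hn => by simp [hn]]
  norm_num [Nat.factorial]

theorem expRemainderDivSq_nonneg {t : ℝ} (ht : 0 ≤ t) : 0 ≤ expRemainderDivSq t :=
  tsum_nonneg fun n => by positivity

theorem monotoneOn_expRemainderDivSq : MonotoneOn expRemainderDivSq (Ici 0) :=
  fun s hs t _ hst => Summable.tsum_le_tsum (fun n => by gcongr)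
    (summable_pow_div_factorial_add_two s) (summable_pow_div_factorial_add_two t)

theorem expRemainderDivSq_eq {t : ℝ} (ht : t ≠ 0) :
    expRemainderDivSq t = (Real.exp t - 1 - t) / t ^ 2 := by
  rw [← sq_mul_expRemainderDivSq, mul_div_cancel_left₀ _ (pow_ne_zero 2 ht)]

theorem lintegral_Ioo_ofReal_eq_of_hasDerivAt_of_tendsto {g g' : ℝ → ℝ} {a b ga gb : ℝ}
    (hab : a < b) (hderiv : ∀ x ∈ Ioo a b, HasDerivAt g (g' x) x)
    (hg' : ∀ x ∈ Ioo a b, 0 ≤ g' x) (ha : Tendsto g (𝓝[>] a) (𝓝 ga))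
    (hb : Tendsto g (𝓝[<] b) (𝓝 gb)) :
    ∫⁻ x in Ioo a b, ENNReal.ofReal (g' x) = ENNReal.ofReal (gb - ga) := by
  set G := Function.update (Function.update g a ga) b gb
  have hGderiv : ∀ x ∈ Ioo a b, HasDerivAt G (g' x) x := by
    refine fun x hx => (hderiv x hx).congr_of_eventuallyEq ?_
    filter_upwards [Ioo_mem_nhds hx.1 hx.2] with y hy
    simp only [G, Function.update_of_ne hy.2.ne, Function.update_of_ne hy.1.ne']
  have hGcont : ContinuousOn G (Icc a b) := by
    rw [continuousOn_update_iff, continuousOn_update_iff, Icc_sdiff_right, Ico_sdiff_left]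
    refine ⟨⟨fun x hx => (hderiv x hx).continuousAt.continuousWithinAt, fun _ => ?_⟩, fun _ => ?_⟩
    · exact ha.mono_left (nhdsWithin_mono _ Ioo_subset_Ioi_self)
    · refine (hb.congr' ?_).mono_left (nhdsWithin_mono _ Ico_subset_Iio_self)
      filter_upwards [Ioo_mem_nhdsLT hab] with x hx using
        (Function.update_of_ne hx.1.ne' _ _).symm
  have hint : IntegrableOn g' (Ioc a b) :=
    intervalIntegral.integrableOn_deriv_of_nonneg hGcont hGderiv hg'
  have hFTC : ∫ x in a..b, g' x = gb - ga := by
    simpa [G, hab.ne, hab.ne'] using intervalIntegral.integral_eq_sub_of_hasDerivAt_of_le hab.le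
      hGcont hGderiv ((intervalIntegrable_iff_integrableOn_Ioc_of_le hab.le).2 hint)
  rw [← ofReal_integral_eq_lintegral_ofReal (hint.mono_set Ioo_subset_Ioc_self)
    ((ae_restrict_mem measurableSet_Ioo).mono hg'), ← integral_Ioc_eq_integral_Ioo,
    ← intervalIntegral.integral_of_le hab.le, hFTC]

theorem hasDerivAt_sub_one_div_log {p : ℝ} (hp0 : 0 < p) (hp1 : p ≠ 1) :
    HasDerivAt (fun q => (q - 1) / Real.log q) ((1 / p - 1 + Real.log p) / Real.log p ^ 2) p := by
  have hlog : Real.log p ≠ 0 := Real.log_ne_zero_of_pos_of_ne_one hp0 hp1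
  refine (((hasDerivAt_id' p).sub_const 1).fun_div (Real.hasDerivAt_log hp0.ne') hlog).congr_deriv
    ?_
  field_simp
  ring

theorem tendsto_sub_one_div_log_nhdsGT_zero :
    Tendsto (fun p => (p - 1) / Real.log p) (𝓝[>] 0) (𝓝 0) :=
  (tendsto_nhdsWithin_of_tendsto_nhds (continuous_sub_right 1).continuousAt).div_atBot
    Real.tendsto_log_nhdsGT_zero

-- `log p / (p - 1)` is the slope of `log` at `1`, whose derivative there is `1`.
theorem tendsto_sub_one_div_log_nhdsNE_one :
    Tendsto (fun p => (p - 1) / Real.log p) (𝓝[≠] 1) (𝓝 1) := by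
  have hslope : Tendsto (slope Real.log 1) (𝓝[≠] 1) (𝓝 1) := by
    simpa using hasDerivAt_iff_tendsto_slope.1 (Real.hasDerivAt_log one_ne_zero)
  convert hslope.inv₀ one_ne_zero using 1
  · ext p
    simp [slope_def_field]
  · simp

theorem div_log_sq_eq_expRemainderDivSq {p : ℝ} (hp0 : 0 < p) (hp1 : p ≠ 1) :
    (1 / p - 1 + Real.log p) / Real.log p ^ 2 = expRemainderDivSq (-Real.log p) := by
  have hlog : Real.log p ≠ 0 := Real.log_ne_zero_of_pos_of_ne_one hp0 hp1
  rw [expRemainderDivSq_eq (neg_ne_zero.2 hlog), Real.exp_neg, Real.exp_log hp0, neg_sq]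
  ring

/-- The Ramdas calibrator `f(p) = (1/p − 1 + ln p)/(ln p)²` for
`p ∈ (0,1)`, with `f(1) = 1/2`, integrates to exactly `1` over `(0,1)` (as a
Lebesgue integral) and is nonincreasing on `(0,1]`. -/
theorem ramdas_calibrator_is_calibrator
    (f : ℝ → ℝ)
    (hf : ∀ p : ℝ, f p = if p = 1 then 1 / 2
      else (1 / p - 1 + Real.log p) / (Real.log p) ^ 2) :
    (∫⁻ p in Set.Ioo (0 : ℝ) 1, ENNReal.ofReal (f p) = 1) ∧
    (∀ p ∈ Set.Ioc (0 : ℝ) 1, ∀ q ∈ Set.Ioc (0 : ℝ) 1, p ≤ q → f q ≤ f p) := by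
  have hf_eq : ∀ p ∈ Ioc (0 : ℝ) 1, f p = expRemainderDivSq (-Real.log p) := by
    rintro p ⟨hp0, -⟩
    rw [hf]
    split_ifs with hp1
    · simp [hp1, expRemainderDivSq_zero]
    · exact div_log_sq_eq_expRemainderDivSq hp0 hp1
  have hlog_nonneg : ∀ p ∈ Ioc (0 : ℝ) 1, 0 ≤ -Real.log p := fun p hp =>
    neg_nonneg.2 (Real.log_nonpos hp.1.le hp.2)
  refine ⟨?_, fun p hp q hq hpq => ?_⟩
  · have hderiv : ∀ p ∈ Ioo (0 : ℝ) 1, HasDerivAt (fun q => (q - 1) / Real.log q) (f p) p :=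
      fun p hp => by
        rw [hf, if_neg hp.2.ne]
        exact hasDerivAt_sub_one_div_log hp.1 hp.2.ne
    have hf_nonneg : ∀ p ∈ Ioo (0 : ℝ) 1, 0 ≤ f p := fun p hp => by
      rw [hf_eq p (Ioo_subset_Ioc_self hp)]
      exact expRemainderDivSq_nonneg (hlog_nonneg p (Ioo_subset_Ioc_self hp))
    rw [lintegral_Ioo_ofReal_eq_of_hasDerivAt_of_tendsto zero_lt_one hderiv hf_nonneg
      tendsto_sub_one_div_log_nhdsGT_zero
      (tendsto_sub_one_div_log_nhdsNE_one.mono_left (nhdsWithin_mono _ fun _ hx => ne_of_lt hx))]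
    simp
  · rw [hf_eq p hp, hf_eq q hq]
    exact monotoneOn_expRemainderDivSq (hlog_nonneg q hq) (hlog_nonneg p hp)
      (neg_le_neg (Real.log_le_log hp.1 hpq))
end

section
/- Let V be a random variable on a probability space (Ω, 𝓕, P) with values in (0,1] satisfying P(V ≤ ε) ≤ ε for every ε ∈ (0,1]. Then E[ (1/V − 1 + ln V)/(ln V)² ] ≤ 1, where the integrand is taken to be 1/2 on the event {V = 1}. In other words, the Ramdas calibration of any p-test is an e-test. -/
/-!
The Ramdas calibrator is the uniform mixture `f(v) = ∫₀¹ κ v^(κ-1) dκ` of the power calibrators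
`v ↦ κ v^(κ-1)`. Each power calibrator turns a p-value `V` into an e-value: by the layer-cake
formula and `P(V^(κ-1) > t) ≤ t^(-1/(1-κ))` for `t > 1`, one gets `E[V^(κ-1)] ≤ 1/κ`.
Tonelli then bounds `E[f(V)]` by the average over `κ` of these expectations, which is at most `1`.
-/

open MeasureTheory ENNReal Set

noncomputable def ramdasCalibrator (v : ℝ) : ℝ :=
  if v = 1 then 1 / 2 else (1 / v - 1 + Real.log v) / Real.log v ^ 2

def IsPValue {Ω : Type*} [MeasurableSpace Ω] (P : Measure Ω) (V : Ω → ℝ) : Prop :=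
  ∀ ε ∈ Ioc (0 : ℝ) 1, P {ω | V ω ≤ ε} ≤ ENNReal.ofReal ε

theorem hasDerivAt_mul_rpow_antideriv {v : ℝ} (hv : 0 < v) (hlog : Real.log v ≠ 0) (κ : ℝ) :
    HasDerivAt (fun κ => (Real.log v * κ - 1) * v ^ (κ - 1) / Real.log v ^ 2)
      (κ * v ^ (κ - 1)) κ := by
  have hpow : HasDerivAt (fun κ : ℝ => v ^ (κ - 1)) (v ^ (κ - 1) * Real.log v) κ := by
    have := (Real.hasStrictDerivAt_const_rpow hv (κ - 1)).hasDerivAt.comp κ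
      ((hasDerivAt_id κ).sub_const 1)
    rwa [mul_one] at this
  have hlin : HasDerivAt (fun κ : ℝ => Real.log v * κ - 1) (Real.log v) κ := by
    simpa using ((hasDerivAt_id κ).const_mul (Real.log v)).sub_const 1
  refine ((hlin.mul hpow).div_const (Real.log v ^ 2)).congr_deriv ?_
  field_simp
  ring

theorem continuous_mul_rpow_sub_one {v : ℝ} (hv : 0 < v) :
    Continuous fun κ : ℝ => κ * v ^ (κ - 1) :=
  continuous_id.mul <| continuous_const.rpow (by fun_prop) fun _ => .inl hv.ne'

theorem integral_mul_rpow_sub_one {v : ℝ} (hv : 0 < v) :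
    ∫ κ in (0 : ℝ)..1, κ * v ^ (κ - 1) = ramdasCalibrator v := by
  unfold ramdasCalibrator
  split_ifs with h1
  · simp [h1]
  have hlog : Real.log v ≠ 0 := Real.log_ne_zero_of_pos_of_ne_one hv h1
  rw [intervalIntegral.integral_eq_sub_of_hasDerivAt
    (fun κ _ => hasDerivAt_mul_rpow_antideriv hv hlog κ)
    ((continuous_mul_rpow_sub_one hv).intervalIntegrable 0 1)]
  simp only [sub_self, Real.rpow_zero, zero_sub, Real.rpow_neg_one]
  field_simp
  ring

theorem ofReal_ramdasCalibrator_eq_lintegral {v : ℝ} (hv : 0 < v) :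
    ENNReal.ofReal (ramdasCalibrator v) =
      ∫⁻ κ in Ioc 0 1, ENNReal.ofReal (κ * v ^ (κ - 1)) := by
  rw [← integral_mul_rpow_sub_one hv, intervalIntegral.integral_of_le zero_le_one,
    ofReal_integral_eq_lintegral_ofReal
      (continuous_mul_rpow_sub_one hv).integrableOn_Ioc]
  exact (ae_restrict_iff' measurableSet_Ioc).2 <| .of_forall fun κ hκ =>
    mul_nonneg hκ.1.le (Real.rpow_nonneg hv.le _)

theorem lintegral_Ioi_one_rpow {r : ℝ} (hr : r < -1) :
    ∫⁻ t in Ioi 1, ENNReal.ofReal (t ^ r) = ENNReal.ofReal (-(r + 1))⁻¹ := by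
  rw [← ofReal_integral_eq_lintegral_ofReal (integrableOn_Ioi_rpow_of_lt hr one_pos)
    ((ae_restrict_iff' measurableSet_Ioi).2 <| .of_forall fun t ht =>
      Real.rpow_nonneg (zero_le_one.trans (le_of_lt ht)) _),
    integral_Ioi_rpow_of_lt hr one_pos, Real.one_rpow, neg_div, div_eq_inv_mul, mul_one,
    inv_neg]

namespace IsPValue

variable {Ω : Type*} [MeasurableSpace Ω] {P : Measure Ω} {V : Ω → ℝ}

theorem measure_lt_rpow_sub_one_le (hpval : IsPValue P V) (hVpos : ∀ ω, 0 < V ω)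
    {κ : ℝ} (hκ : κ < 1) {t : ℝ} (ht : 1 < t) :
    P {ω | t < V ω ^ (κ - 1)} ≤ ENNReal.ofReal (t ^ (-(1 - κ)⁻¹)) := by
  have hexp : -(1 - κ)⁻¹ ≤ 0 := by simp only [neg_nonpos, inv_nonneg]; linarith
  refine (measure_mono fun ω (hω : t < V ω ^ (κ - 1)) => ?_).trans
    (hpval _ ⟨by positivity, Real.rpow_le_one_of_one_le_of_nonpos ht.le hexp⟩)
  calc V ω = (V ω ^ (κ - 1)) ^ (-(1 - κ)⁻¹) := by
        rw [← Real.rpow_mul (hVpos ω).le, show (κ - 1) * -(1 - κ)⁻¹ = 1 by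
          field_simp [(sub_pos.2 hκ).ne']; ring, Real.rpow_one]
    _ ≤ t ^ (-(1 - κ)⁻¹) := Real.rpow_le_rpow_of_nonpos (by linarith) hω.le hexp

theorem lintegral_rpow_sub_one_le_inv [IsProbabilityMeasure P] (hpval : IsPValue P V)
    (hV : Measurable V) (hVpos : ∀ ω, 0 < V ω) {κ : ℝ} (hκ0 : 0 < κ) (hκ1 : κ < 1) :
    ∫⁻ ω, ENNReal.ofReal (V ω ^ (κ - 1)) ∂P ≤ ENNReal.ofReal κ⁻¹ := by
  have hr : -(1 - κ)⁻¹ < -1 := by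
    rw [neg_lt_neg_iff, one_lt_inv₀ (by linarith)]; linarith
  have hsmall : ∫⁻ t in Ioc 0 1, P {ω | t < V ω ^ (κ - 1)} ≤ 1 :=
    calc ∫⁻ t in Ioc 0 1, P {ω | t < V ω ^ (κ - 1)}
        ≤ ∫⁻ _ in Ioc (0 : ℝ) 1, 1 := setLIntegral_mono measurable_const fun _ _ => prob_le_one
      _ = 1 := by simp
  have hlarge : ∫⁻ t in Ioi 1, P {ω | t < V ω ^ (κ - 1)} ≤ ENNReal.ofReal ((1 - κ) / κ) :=
    calc ∫⁻ t in Ioi 1, P {ω | t < V ω ^ (κ - 1)}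
        ≤ ∫⁻ t in Ioi 1, ENNReal.ofReal (t ^ (-(1 - κ)⁻¹)) :=
          setLIntegral_mono' measurableSet_Ioi fun _ ht => hpval.measure_lt_rpow_sub_one_le hVpos hκ1 ht
      _ = ENNReal.ofReal ((1 - κ) / κ) := by
          rw [lintegral_Ioi_one_rpow hr, ← inv_div, show -(-(1 - κ)⁻¹ + 1) = κ / (1 - κ) by
            field_simp [(sub_pos.2 hκ1).ne']; ring]
  rw [lintegral_eq_lintegral_meas_lt P (.of_forall fun ω => Real.rpow_nonneg (hVpos ω).le _)
      (hV.pow_const _).aemeasurable, ← Ioc_union_Ioi_eq_Ioi zero_le_one,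
    lintegral_union measurableSet_Ioi (Ioc_disjoint_Ioi le_rfl)]
  calc _ ≤ 1 + ENNReal.ofReal ((1 - κ) / κ) := add_le_add hsmall hlarge
    _ = ENNReal.ofReal κ⁻¹ := by
      rw [← ofReal_one, ← ofReal_add zero_le_one (div_nonneg (by linarith) hκ0.le)]
      congr 1
      field_simp
      ring

theorem lintegral_mul_rpow_sub_one_le_one [IsProbabilityMeasure P] (hpval : IsPValue P V)
    (hV : Measurable V) (hVpos : ∀ ω, 0 < V ω) {κ : ℝ} (hκ : κ ∈ Ioc 0 1) :
    ∫⁻ ω, ENNReal.ofReal (κ * V ω ^ (κ - 1)) ∂P ≤ 1 := by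
  obtain ⟨hκ0, hκ1 | rfl⟩ := And.imp_right lt_or_eq_of_le hκ
  · simp_rw [ofReal_mul hκ0.le]
    calc ∫⁻ ω, ENNReal.ofReal κ * ENNReal.ofReal (V ω ^ (κ - 1)) ∂P
        = ENNReal.ofReal κ * ∫⁻ ω, ENNReal.ofReal (V ω ^ (κ - 1)) ∂P :=
          lintegral_const_mul' _ _ ofReal_ne_top
      _ ≤ ENNReal.ofReal κ * ENNReal.ofReal κ⁻¹ := by
          gcongr; exact hpval.lintegral_rpow_sub_one_le_inv hV hVpos hκ0 hκ1
      _ = 1 := by rw [← ofReal_mul hκ0.le, mul_inv_cancel₀ hκ0.ne', ofReal_one]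
  · simp

end IsPValue

/-- The Ramdas calibration of any p-value is an e-value: if `V` is a
`(0,1]`-valued random variable with `P(V ≤ ε) ≤ ε` for all `ε ∈ (0,1]`, then
`E[(1/V − 1 + ln V)/(ln V)²] ≤ 1`, the integrand being `1/2` on `{V = 1}`. -/
theorem ramdas_calibration_is_e_test
    {Ω : Type*} [MeasurableSpace Ω] (P : Measure Ω) [IsProbabilityMeasure P]
    (V : Ω → ℝ) (hV : Measurable V) (hVrange : ∀ ω, V ω ∈ Set.Ioc (0 : ℝ) 1)
    (hpval : ∀ ε ∈ Set.Ioc (0 : ℝ) 1, P {ω | V ω ≤ ε} ≤ ENNReal.ofReal ε) :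
    ∫⁻ ω, ENNReal.ofReal (if V ω = 1 then 1 / 2
      else (1 / V ω - 1 + Real.log (V ω)) / (Real.log (V ω)) ^ 2) ∂P ≤ 1 := by
  have hVpos : ∀ ω, 0 < V ω := fun ω => (hVrange ω).1
  change ∫⁻ ω, ENNReal.ofReal (ramdasCalibrator (V ω)) ∂P ≤ 1
  simp_rw [ofReal_ramdasCalibrator_eq_lintegral (hVpos _)]
  rw [lintegral_lintegral_swap (by fun_prop)]
  calc ∫⁻ κ in Ioc 0 1, ∫⁻ ω, ENNReal.ofReal (κ * V ω ^ (κ - 1)) ∂P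
      ≤ ∫⁻ _ in Ioc (0 : ℝ) 1, 1 :=
        setLIntegral_mono' measurableSet_Ioc fun _ hκ =>
          IsPValue.lintegral_mul_rpow_sub_one_le_one hpval hV hVpos hκ
    _ = 1 := by simp
end

section
/- Let Σ be a symmetric positive-definite real n×n matrix, let I ⊆ {1, …, n} be a nonempty subset of coordinates, let Σ_{II} denote the principal submatrix of Σ with rows and columns indexed by I, and for x ∈ ℝⁿ let x_I denote the corresponding subvector. Then for every x ∈ ℝⁿ, x_Iᵀ (Σ_{II})⁻¹ x_I ≤ xᵀ Σ⁻¹ x; i.e., the squared Mahalanobis distance is non-increasing under marginalization to a subset of variables. -/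
open Matrix

/-!
Write `P` for the `n × I` matrix of the coordinate inclusion `ℝ^I → ℝⁿ`, so that
`Σ_{II} = Pᵀ Σ P` and `x_I = Pᵀ x`. For positive definite `Σ`, completing the square gives
`xᵀ Σ⁻¹ x = max_w (2 xᵀ w - wᵀ Σ w)`; the marginal quantity `x_Iᵀ (Pᵀ Σ P)⁻¹ x_I` is the same
maximum taken only over `w` in the range of `P`, namely at `w = P (Pᵀ Σ P)⁻¹ Pᵀ x`.
-/

namespace Matrix

variable {ι κ : Type*} [Fintype ι]

theorem PosSemidef.two_mul_mulVec_dotProduct_sub_le {S : Matrix ι ι ℝ}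
    (hS : S.PosSemidef) (v w : ι → ℝ) :
    2 * (S *ᵥ v ⬝ᵥ w) - w ⬝ᵥ S *ᵥ w ≤ v ⬝ᵥ S *ᵥ v := by
  have hsymm : v ⬝ᵥ S *ᵥ w = S *ᵥ v ⬝ᵥ w := by
    rw [dotProduct_mulVec, ← mulVec_transpose, (isHermitian_iff_isSymm.1 hS.isHermitian).eq]
  have hnonneg := hS.dotProduct_mulVec_nonneg (w - v)
  simp only [star_trivial, mulVec_sub, dotProduct_sub, sub_dotProduct] at hnonneg
  linarith [dotProduct_comm w (S *ᵥ v)]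

theorem PosDef.dotProduct_vecMul_inv_mulVec_le [DecidableEq ι] [Fintype κ] [DecidableEq κ]
    {S : Matrix ι ι ℝ} (hS : S.PosDef) (P : Matrix ι κ ℝ) (hP : IsUnit (Pᵀ * S * P).det)
    (x : ι → ℝ) :
    x ᵥ* P ⬝ᵥ (Pᵀ * S * P)⁻¹ *ᵥ (x ᵥ* P) ≤ x ⬝ᵥ S⁻¹ *ᵥ x := by
  set y := x ᵥ* P
  set z := (Pᵀ * S * P)⁻¹ *ᵥ y
  have hx : S *ᵥ S⁻¹ *ᵥ x = x := by
    rw [mulVec_mulVec, mul_nonsing_inv _ ((isUnit_iff_isUnit_det _).1 hS.isUnit), one_mulVec]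
  have hz : (Pᵀ * S * P) *ᵥ z = y := by
    rw [mulVec_mulVec, mul_nonsing_inv _ hP, one_mulVec]
  have hlin : S *ᵥ S⁻¹ *ᵥ x ⬝ᵥ P *ᵥ z = y ⬝ᵥ z := by
    rw [hx, dotProduct_mulVec]
  have hquad : P *ᵥ z ⬝ᵥ S *ᵥ P *ᵥ z = y ⬝ᵥ z := by
    rw [dotProduct_comm, dotProduct_mulVec, ← mulVec_transpose, mulVec_mulVec, mulVec_mulVec, hz]
  calc y ⬝ᵥ z = 2 * (y ⬝ᵥ z) - y ⬝ᵥ z := by ring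
    _ = 2 * (S *ᵥ S⁻¹ *ᵥ x ⬝ᵥ P *ᵥ z) - P *ᵥ z ⬝ᵥ S *ᵥ P *ᵥ z := by rw [hlin, hquad]
    _ ≤ S⁻¹ *ᵥ x ⬝ᵥ S *ᵥ S⁻¹ *ᵥ x := hS.posSemidef.two_mul_mulVec_dotProduct_sub_le _ _
    _ = x ⬝ᵥ S⁻¹ *ᵥ x := by rw [hx, dotProduct_comm]

variable {R : Type*} [NonAssocSemiring R] [DecidableEq ι]

theorem submatrix_eq_transpose_mul_mul (S : Matrix ι ι R) (e : κ → ι) :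
    S.submatrix e e =
      ((1 : Matrix ι ι R).submatrix id e)ᵀ * S * (1 : Matrix ι ι R).submatrix id e := by
  ext i j
  simp [mul_apply, one_apply]

theorem vecMul_one_submatrix (x : ι → R) (e : κ → ι) :
    x ᵥ* (1 : Matrix ι ι R).submatrix id e = x ∘ e := by
  ext k
  simp [vecMul, dotProduct, one_apply]

end Matrix

theorem mahalanobis_nonincreasing_under_marginalization_general
    (n : ℕ) (Sig : Matrix (Fin n) (Fin n) ℝ) (hpd : Sig.PosDef)
    (I : Finset (Fin n)) (x : Fin n → ℝ) :
    (fun i : {i // i ∈ I} => x i.val) ⬝ᵥ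
        (Sig.submatrix (fun i : {i // i ∈ I} => i.val)
          (fun i : {i // i ∈ I} => i.val))⁻¹.mulVec (fun i : {i // i ∈ I} => x i.val)
      ≤ x ⬝ᵥ Sig⁻¹.mulVec x := by
  have hsub := hpd.submatrix (e := fun i : {i // i ∈ I} => i.val) Subtype.val_injective
  rw [submatrix_eq_transpose_mul_mul] at hsub ⊢
  have := hpd.dotProduct_vecMul_inv_mulVec_le _ ((isUnit_iff_isUnit_det _).1 hsub.isUnit) x
  rwa [vecMul_one_submatrix] at this

/-- The squared Mahalanobis distance is non-increasing under
marginalization: for a symmetric positive-definite `Σ` and a nonempty subset `I` of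
coordinates, `x_Iᵀ (Σ_{II})⁻¹ x_I ≤ xᵀ Σ⁻¹ x` for every `x`. -/
theorem mahalanobis_nonincreasing_under_marginalization
    (n : ℕ) (Sig : Matrix (Fin n) (Fin n) ℝ) (hpd : Sig.PosDef)
    (I : Finset (Fin n)) (hI : I.Nonempty) (x : Fin n → ℝ) :
    (fun i : {i // i ∈ I} => x i.val) ⬝ᵥ
        (Sig.submatrix (fun i : {i // i ∈ I} => i.val)
          (fun i : {i // i ∈ I} => i.val))⁻¹.mulVec (fun i : {i // i ∈ I} => x i.val)
      ≤ x ⬝ᵥ Sig⁻¹.mulVec x :=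
  mahalanobis_nonincreasing_under_marginalization_general n Sig hpd I x
end
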